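/- arXiv:math/9904074 — 2 statements merged into one kernel-verified Lean document; each statement's English description precedes it below -/
import Mathlib

section
/- Let K* act on A^{l+m} by t·(x,y) = (tx, t^{-1}y) with x ∈ K^l, y ∈ K^m, and consider the invariant ring K[x_i y_j : 1 ≤ i ≤ l, 1 ≤ j ≤ m]. The ring of K*-invariant polynomial functions on A^{l+m} is exactly the subalgebra generated by the products x_i y_j; i.e., a polynomial f(x,y) satisfies f(tx, t^{-1}y) = f(x,y) for all t ∈ K* iff f is a polynomial in the l·m products x_i y_j. -/
open MvPolynomial

private lemma eval_aeval' {K : Type*} [CommSemiring K] {σ : Type*}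
    (g : σ → MvPolynomial σ K) (p : MvPolynomial σ K) (z : σ → K) :
    eval z (aeval g p) = eval (fun s => eval z (g s)) p := by
  induction p using MvPolynomial.induction_on with
  | C c => simp
  | add p q hp hq => simp only [map_add, ← aeval_eq_bind₁] at *; rw [hp, hq]
  | mul_X p s hp => simp only [map_mul, ← aeval_eq_bind₁, eval_X] at *; rw [hp, aeval_X]

private lemma mono_mem {K : Type*} [CommRing K] {l m : ℕ} (n : ℕ) :
    ∀ d : (Fin l ⊕ Fin m) →₀ ℕ, (∑ i, d (Sum.inl i)) = n →
    (∑ i, d (Sum.inl i)) = (∑ j, d (Sum.inr j)) →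
    (monomial d (1 : K)) ∈ Algebra.adjoin K
      {g : MvPolynomial (Fin l ⊕ Fin m) K |
        ∃ i j, g = X (Sum.inl i) * X (Sum.inr j)} := by
  induction n with
  | zero =>
    intro d h hb
    have hd : d = 0 := by
      ext s
      cases s with
      | inl i =>
        exact Finset.sum_eq_zero_iff.mp h i (Finset.mem_univ i)
      | inr j =>
        exact Finset.sum_eq_zero_iff.mp (hb ▸ h) j (Finset.mem_univ j)
    rw [hd]
    simpa [monomial_zero'] using Subalgebra.algebraMap_mem _ (1 : K)
  | succ n ih =>
    intro d h hb
    obtain ⟨i, -, hi⟩ : ∃ i ∈ Finset.univ, d (Sum.inl i) ≠ 0 :=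
      Finset.exists_ne_zero_of_sum_ne_zero (by omega)
    obtain ⟨j, -, hj⟩ : ∃ j ∈ Finset.univ, d (Sum.inr j) ≠ 0 :=
      Finset.exists_ne_zero_of_sum_ne_zero (by rw [← hb]; omega)
    set e : (Fin l ⊕ Fin m) →₀ ℕ :=
      d - Finsupp.single (Sum.inl i) 1 - Finsupp.single (Sum.inr j) 1 with he
    have hde : d = e + Finsupp.single (Sum.inl i) 1 + Finsupp.single (Sum.inr j) 1 := by
      ext s
      have h1 : d (Sum.inl i) ≥ 1 := by omega
      have h2 : d (Sum.inr j) ≥ 1 := by omega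
      simp only [he, Finsupp.add_apply, Finsupp.coe_tsub, Pi.sub_apply,
        Finsupp.single_apply]
      rcases s with i' | j'
      · rcases eq_or_ne i i' with rfl | hii
        · simp; omega
        · simp [hii]
      · rcases eq_or_ne j j' with rfl | hjj
        · simp; omega
        · simp [hjj]
    have hel : ∑ i', e (Sum.inl i') = n := by
      have hh := h
      rw [hde] at hh
      simp [Finsupp.add_apply, Finsupp.single_apply, Finset.sum_add_distrib] at hh
      omega
    have her : ∑ i', e (Sum.inl i') = ∑ j', e (Sum.inr j') := by
      have hbb := hb
      rw [hde] at hbb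
      simp [Finsupp.add_apply, Finsupp.single_apply, Finset.sum_add_distrib] at hbb
      omega
    have key : monomial d (1 : K) =
        monomial e 1 * (X (Sum.inl i) * X (Sum.inr j)) := by
      rw [hde, X, X, monomial_mul, monomial_mul]
      simp [add_assoc]
    rw [key]
    exact mul_mem (ih e hel her) (Algebra.subset_adjoin ⟨i, j, rfl⟩)

private lemma coeff_scale {K : Type*} [CommSemiring K] {σ : Type*}
    (u : σ → K) (f : MvPolynomial σ K) (d : σ →₀ ℕ) :
    coeff d (aeval (fun s => C (u s) * X s : σ → MvPolynomial σ K) f) =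
      (d.prod fun s k => u s ^ k) * coeff d f := by
  classical
  have haux : ∀ (d' : σ →₀ ℕ) (c : K),
      aeval (fun s => C (u s) * X s : σ → MvPolynomial σ K) (monomial d' c) =
        monomial d' ((d'.prod fun s k => u s ^ k) * c) := by
    intro d' c
    rw [aeval_monomial]
    have hsplit : (d'.prod fun s k => (C (u s) * X s : MvPolynomial σ K) ^ k) =
        C (d'.prod fun s k => u s ^ k) * (d'.prod fun s k => (X s : MvPolynomial σ K) ^ k) := by
      rw [Finsupp.prod, Finsupp.prod, Finsupp.prod, map_prod, ← Finset.prod_mul_distrib]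
      exact Finset.prod_congr rfl fun s _ => by rw [mul_pow, map_pow]
    rw [hsplit, ← monomial_eq, algebraMap_eq, C_mul_monomial, mul_comm c]
  conv_lhs => rw [f.as_sum, map_sum]
  rw [coeff_sum]
  have hterm : ∀ d' ∈ f.support,
      coeff d (aeval (fun s => C (u s) * X s : σ → MvPolynomial σ K)
        (monomial d' (coeff d' f))) =
      if d' = d then (d'.prod fun s k => u s ^ k) * coeff d' f else 0 := by
    intro d' _
    rw [haux, coeff_monomial]
  rw [Finset.sum_congr rfl hterm, Finset.sum_ite_eq' f.support d]
  split_ifs with hd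
  · rfl
  · rw [notMem_support_iff.mp hd, mul_zero]

/-- For the `K*`-action `t·(x,y) = (tx, t⁻¹y)` on `A^{l+m}` over an infinite
field, a polynomial `f` in the variables `x_1,...,x_l,y_1,...,y_m` is invariant
(`f(tx, t⁻¹y) = f(x,y)` for all `t ≠ 0`) iff `f` lies in the subalgebra generated by the
`l·m` products `x_i y_j`. -/
theorem stmt4 {K : Type*} [Field K] [Infinite K] (l m : ℕ)
    (f : MvPolynomial (Fin l ⊕ Fin m) K) :
    (∀ t : K, t ≠ 0 → ∀ (x : Fin l → K) (y : Fin m → K),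
        MvPolynomial.eval (Sum.elim (fun i => t * x i) (fun j => t⁻¹ * y j)) f =
          MvPolynomial.eval (Sum.elim x y) f) ↔
      f ∈ Algebra.adjoin K
        {g : MvPolynomial (Fin l ⊕ Fin m) K |
          ∃ i j, g = MvPolynomial.X (Sum.inl i) * MvPolynomial.X (Sum.inr j)} := by
  constructor
  · intro h
    have hfix : ∀ t : K, t ≠ 0 →
        aeval (fun s => C (Sum.elim (fun _ => t) (fun _ => t⁻¹) s) * X s :
          (Fin l ⊕ Fin m) → MvPolynomial (Fin l ⊕ Fin m) K) f = f := by
      intro t ht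
      apply MvPolynomial.funext
      intro z
      have hz : Sum.elim (z ∘ Sum.inl) (z ∘ Sum.inr) = z := by
        funext s; cases s <;> rfl
      rw [eval_aeval']
      have hg : (fun s => eval z
          (C (Sum.elim (fun _ => t) (fun _ => t⁻¹) s) * X s)) =
          Sum.elim (fun i => t * (z ∘ Sum.inl) i) (fun j => t⁻¹ * (z ∘ Sum.inr) j) := by
        funext s; cases s <;> simp
      rw [hg, h t ht, hz]
    have key : ∀ d ∈ f.support,
        (∑ i, d (Sum.inl i)) = ∑ j, d (Sum.inr j) := by
      intro d hd
      set A := ∑ i, d (Sum.inl i) with hA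
      set B := ∑ j, d (Sum.inr j) with hB
      have hc : coeff d f ≠ 0 := mem_support_iff.mp hd
      have hcoeff : ∀ t : K, t ≠ 0 → t ^ A * (t⁻¹) ^ B * coeff d f = coeff d f := by
        intro t ht
        have hthis := congrArg (coeff d) (hfix t ht)
        rw [coeff_scale] at hthis
        have hW : (d.prod fun s k => (Sum.elim (fun _ => t) (fun _ => t⁻¹) s) ^ k) =
            t ^ A * (t⁻¹) ^ B := by
          rw [Finsupp.prod_fintype _ _ (fun s => pow_zero _), Fintype.prod_sum_type]
          simp only [Sum.elim_inl, Sum.elim_inr]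
          rw [Finset.prod_pow_eq_pow_sum, Finset.prod_pow_eq_pow_sum]
        rw [← hW]
        exact hthis
      have hpow : ∀ t : K, t ≠ 0 → t ^ A = t ^ B := by
        intro t ht
        have h2 := hcoeff t ht
        have h1 : t ^ A * (t⁻¹) ^ B = 1 := mul_right_cancel₀ hc (by rw [h2, one_mul])
        rw [inv_pow, ← div_eq_mul_inv, div_eq_one_iff_eq (pow_ne_zero _ ht)] at h1
        exact h1
      by_contra hAB
      have hX : (Polynomial.X : Polynomial K) ^ (A + 1) = Polynomial.X ^ (B + 1) := by
        apply Polynomial.funext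
        intro t
        by_cases ht : t = 0
        · simp [ht]
        · simp only [pow_succ, Polynomial.eval_mul, Polynomial.eval_pow, Polynomial.eval_X]
          rw [hpow t ht]
      have := congrArg Polynomial.natDegree hX
      simp [Polynomial.natDegree_X_pow] at this
      exact hAB this
    rw [f.as_sum]
    apply Subalgebra.sum_mem
    intro d hd
    have hm : monomial d (coeff d f) = C (coeff d f) * monomial d 1 := by
      rw [C_mul_monomial, mul_one]
    rw [hm]
    exact mul_mem (by rw [← algebraMap_eq]; exact Subalgebra.algebraMap_mem _ _)
      (mono_mem _ d rfl (key d hd))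
  · intro hf t ht x y
    induction hf using Algebra.adjoin_induction with
    | mem g hg =>
      obtain ⟨i, j, rfl⟩ := hg
      simp only [map_mul, eval_X, Sum.elim_inl, Sum.elim_inr]
      field_simp
    | algebraMap r => simp [algebraMap_eq]
    | add p q hp hq ihp ihq => simp [ihp, ihq]
    | mul p q hp hq ihp ihq => simp [ihp, ihq]
end

section
/- Let σ ⊂ N_ℚ = ℚ^n be a full-dimensional rational polyhedral cone and v_0 ∈ N_ℚ a vector. Define the upper boundary Δ_+ of σ with respect to v_0 to be the set of faces τ of σ such that there exists F ∈ σ^∨ with ⟨F, v_0⟩ < 0 and τ ⊂ {v : ⟨F,v⟩ = 0} ∩ σ with F vanishing exactly on τ among elements cutting it out; then the projection π : N_ℚ → N_ℚ/ℚv_0 restricted to each cone of Δ_+ is injective, and the images {π(τ) : τ ∈ Δ_+} form a fan in N_ℚ/ℚv_0. -/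
open Finset in
/-- Let `σ ⊂ ℚ^n` be a finitely generated rational polyhedral cone and
`v₀ ∈ ℚ^n`.  The upper boundary `Δ_+` consists of the faces `σ_F = σ ∩ F^⊥` for
`F ∈ σ^∨` with `⟨F, v₀⟩ < 0` (the faces visible from above).  Then the projection
`π : ℚ^n → ℚ^n/ℚv₀` is injective on each cone of `Δ_+`, and the images form a fan:
`Δ_+` is closed under pairwise intersections (which are again members, i.e. common faces)
and `π(τ₁) ∩ π(τ₂) = π(τ₁ ∩ τ₂)` for `τ₁, τ₂ ∈ Δ_+`. -/
theorem stmt7 (n : ℕ) (G : Finset (Fin n → ℚ)) (v0 : Fin n → ℚ)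
    (σ : Set (Fin n → ℚ))
    (hσ : σ = {x | ∃ c : (Fin n → ℚ) → ℚ, (∀ g, 0 ≤ c g) ∧ x = ∑ g ∈ G, c g • g})
    (dual : Set (Fin n → ℚ))
    (hdual : dual = {F | ∀ v ∈ σ, 0 ≤ ∑ i, F i * v i})
    (Δplus : Set (Set (Fin n → ℚ)))
    (hΔ : Δplus = {τ | ∃ F ∈ dual, (∑ i, F i * v0 i) < 0 ∧
        τ = σ ∩ {v | (∑ i, F i * v i) = 0}})
    (π : (Fin n → ℚ) →ₗ[ℚ] (Fin n → ℚ) ⧸ Submodule.span ℚ {v0})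
    (hπ : π = Submodule.mkQ (Submodule.span ℚ {v0})) :
    (∀ τ ∈ Δplus, Set.InjOn π τ) ∧
    (∀ τ1 ∈ Δplus, ∀ τ2 ∈ Δplus,
      τ1 ∩ τ2 ∈ Δplus ∧ (π '' τ1) ∩ (π '' τ2) = π '' (τ1 ∩ τ2)) := by
  subst hdual hΔ hπ
  -- key computation: if x - y = t • v0 then ⟨F,y⟩ = ⟨F,x⟩ - t⟨F,v0⟩
  have key : ∀ F x y : Fin n → ℚ, ∀ t : ℚ, x - y = t • v0 →
      (∑ i, F i * y i) = (∑ i, F i * x i) - t * ∑ i, F i * v0 i := by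
    intro F x y t h
    have hy : ∀ i, y i = x i - t * v0 i := by
      intro i
      have := congrFun h i
      simp only [Pi.sub_apply, Pi.smul_apply, smul_eq_mul] at this
      linarith
    calc (∑ i, F i * y i) = ∑ i, (F i * x i - t * (F i * v0 i)) := by
          refine Finset.sum_congr rfl fun i _ => ?_
          rw [hy i]; ring
      _ = (∑ i, F i * x i) - t * ∑ i, F i * v0 i := by
          rw [Finset.sum_sub_distrib, Finset.mul_sum]
  -- extract t from equality in the quotient
  have quot : ∀ x y : Fin n → ℚ,
      Submodule.mkQ (Submodule.span ℚ {v0}) x = Submodule.mkQ (Submodule.span ℚ {v0}) y →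
      ∃ t : ℚ, x - y = t • v0 := by
    intro x y h
    rw [Submodule.mkQ_apply, Submodule.mkQ_apply, Submodule.Quotient.eq] at h
    obtain ⟨t, ht⟩ := Submodule.mem_span_singleton.mp h
    exact ⟨t, ht.symm⟩
  constructor
  · rintro τ ⟨F, hF, hFv0, rfl⟩ x hx y hy hxy
    obtain ⟨t, ht⟩ := quot x y hxy
    have hxF : (∑ i, F i * x i) = 0 := hx.2
    have hyF : (∑ i, F i * y i) = 0 := hy.2
    have := key F x y t ht
    have ht0 : t = 0 := by
      have hne : (∑ i, F i * v0 i) ≠ 0 := ne_of_lt hFv0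
      have : t * ∑ i, F i * v0 i = 0 := by linarith
      rcases mul_eq_zero.mp this with h | h
      · exact h
      · exact absurd h hne
    have : x - y = 0 := by rw [ht, ht0, zero_smul]
    exact sub_eq_zero.mp this
  · rintro τ1 ⟨F1, hF1, hF1v0, rfl⟩ τ2 ⟨F2, hF2, hF2v0, rfl⟩
    have hadd : ∀ v : Fin n → ℚ,
        (∑ i, (F1 + F2) i * v i) = (∑ i, F1 i * v i) + (∑ i, F2 i * v i) := by
      intro v
      rw [← Finset.sum_add_distrib]
      refine Finset.sum_congr rfl fun i _ => ?_
      simp [Pi.add_apply, add_mul]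
    constructor
    · refine ⟨F1 + F2, fun v hv => ?_, ?_, ?_⟩
      · rw [hadd v]
        have := hF1 v hv
        have := hF2 v hv
        linarith
      · rw [hadd v0]; linarith
      · ext v
        simp only [Set.mem_inter_iff, Set.mem_setOf_eq, hadd v]
        constructor
        · rintro ⟨⟨hv, h1⟩, _, h2⟩
          exact ⟨hv, by linarith⟩
        · rintro ⟨hv, h12⟩
          have h1 := hF1 v hv
          have h2 := hF2 v hv
          exact ⟨⟨hv, by linarith⟩, hv, by linarith⟩
    · refine Set.Subset.antisymm ?_ (Set.image_inter_subset _ _ _)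
      rintro z ⟨⟨x, hx, rfl⟩, ⟨y, hy, hyx⟩⟩
      obtain ⟨t, ht⟩ := quot y x hyx
      have hxσ : x ∈ σ := hx.1
      have hyσ : y ∈ σ := hy.1
      have hxF1 : (∑ i, F1 i * x i) = 0 := hx.2
      have hyF2 : (∑ i, F2 i * y i) = 0 := hy.2
      have k1 := key F1 y x t ht
      have k2 := key F2 y x t ht
      have hy1 : 0 ≤ ∑ i, F1 i * y i := hF1 y hyσ
      have hx2 : 0 ≤ ∑ i, F2 i * x i := hF2 x hxσ
      -- from k1: ⟨F1,x⟩ = ⟨F1,y⟩ - t⟨F1,v0⟩, so 0 = ⟨F1,y⟩ - t s1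
      -- ⟨F1,y⟩ = t s1 ≥ 0, s1 < 0 ⇒ t ≤ 0
      have ht1 : t ≤ 0 := by nlinarith
      have ht2 : 0 ≤ t := by nlinarith
      have ht0 : t = 0 := le_antisymm ht1 ht2
      have hyx0 : y = x := by
        have : y - x = 0 := by rw [ht, ht0, zero_smul]
        exact sub_eq_zero.mp this
      exact ⟨x, ⟨hx, hyx0 ▸ hy⟩, rfl⟩
end
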